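/- arXiv:2106.11502 — 4 statements merged into one kernel-verified Lean document; each statement's English description precedes it below -/
import Mathlib

section
/- The Split Cycle voting method is Condorcet consistent: for any profile P, if there is a Condorcet winner x in P (i.e., Margin_P(x,y) > 0 for every candidate y ≠ x), then SplitCycle(P) = {x}. -/
open scoped Classical

/-- `r` is a strict linear order on the finite set `X`, relating only members of `X`. -/
def IsLinOn (X : Finset ℕ) (r : ℕ → ℕ → Prop) : Prop :=
  (∀ a b, r a b → a ∈ X ∧ b ∈ X) ∧
  (∀ a, ¬ r a a) ∧
  (∀ a b c, r a b → r b c → r a c) ∧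
  (∀ a ∈ X, ∀ b ∈ X, a ≠ b → r a b ∨ r b a)

/-- A profile assigns to each voter in a nonempty finite set of voters a strict linear
order (ballot) on a nonempty finite set of candidates.  Voters and candidates are both
drawn from the infinite set `ℕ`. -/
structure Profile where
  voters : Finset ℕ
  cands : Finset ℕ
  voters_nonempty : voters.Nonempty
  cands_nonempty : cands.Nonempty
  ballot : ℕ → ℕ → ℕ → Prop
  ballot_lin : ∀ i ∈ voters, IsLinOn cands (ballot i)

/-- `F` is a voting method: it assigns to each profile a nonempty set of winners
among the candidates of the profile. -/
def VotingMethod (F : Profile → Finset ℕ) : Prop :=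
  ∀ P : Profile, (F P).Nonempty ∧ F P ⊆ P.cands

/-- The ballot `r` ranks `x` in first place among the candidates in `X`. -/
def RanksFirst (X : Finset ℕ) (r : ℕ → ℕ → Prop) (x : ℕ) : Prop :=
  x ∈ X ∧ ∀ y ∈ X, y ≠ x → r x y

/-- `P'` is obtained from `P` by adding one new voter `j` whose ballot ranks `x` in
first place. -/
def AddVoter (P P' : Profile) (j x : ℕ) : Prop :=
  P'.cands = P.cands ∧ j ∉ P.voters ∧ P'.voters = insert j P.voters ∧
  (∀ i ∈ P.voters, ∀ a b, (P'.ballot i a b ↔ P.ballot i a b)) ∧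
  RanksFirst P.cands (P'.ballot j) x

/-- `F` satisfies positive involvement (PI). -/
def SatisfiesPI (F : Profile → Finset ℕ) : Prop :=
  ∀ (P P' : Profile) (j x : ℕ), x ∈ F P → AddVoter P P' j x → x ∈ F P'

/-- The margin of `a` over `b` in the profile `P`. -/
noncomputable def marginP (P : Profile) (a b : ℕ) : ℤ :=
  ((P.voters.filter (fun i => P.ballot i a b)).card : ℤ) -
    ((P.voters.filter (fun i => P.ballot i b a)).card : ℤ)

/-- `l` is a majority cycle in `P`: a sequence of candidates, distinct except that the
first and last entries are equal, with a positive margin along each step. -/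
def IsCycle (P : Profile) (l : List ℕ) : Prop :=
  2 ≤ l.length ∧ l.head? = l.getLast? ∧ l.dropLast.Nodup ∧
  (∀ x ∈ l, x ∈ P.cands) ∧ l.Chain' (fun u v => 0 < marginP P u v)

/-- `a` defeats `b` in `P` according to Split Cycle: the margin of `a` over `b` is
positive and greater than the strength (minimal margin along the cycle) of every
majority cycle containing `a` and `b`. -/
def SCdefeats (P : Profile) (a b : ℕ) : Prop :=
  0 < marginP P a b ∧
  ∀ l : List ℕ, IsCycle P l → a ∈ l → b ∈ l →
    ∃ p ∈ l.zip l.tail, marginP P p.1 p.2 < marginP P a b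

/-- The Split Cycle winners: the candidates not defeated by any candidate. -/
noncomputable def SplitCycle (P : Profile) : Finset ℕ :=
  P.cands.filter (fun x => ¬ ∃ y ∈ P.cands, SCdefeats P y x)

/-! Split Cycle only ever overrules a positive margin by a majority cycle through both
candidates. A Condorcet winner lies on no majority cycle, since every candidate of a
cycle is beaten by its predecessor; so it defeats everyone, and nobody beats it. -/

theorem List.IsChain.exists_rel_of_mem_tail {α : Type*} {R : α → α → Prop} {l : List α}
    (h : l.IsChain R) {x : α} (hx : x ∈ l.tail) : ∃ u ∈ l, R u x := by
  obtain ⟨i, hi, rfl⟩ := List.getElem_of_mem hx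
  rw [List.length_tail] at hi
  refine ⟨l[i], List.getElem_mem _, ?_⟩
  simpa only [List.getElem_tail] using List.isChain_iff_getElem.mp h i (by omega)

theorem List.mem_tail_of_head?_eq_getLast? {α : Type*} {l : List α} (hlen : 2 ≤ l.length)
    (hl : l.head? = l.getLast?) {x : α} (hx : x ∈ l) : x ∈ l.tail := by
  match l, hlen, hx with
  | a :: b :: t, _, hx =>
    obtain rfl | hx := List.mem_cons.mp hx
    · rw [List.head?_cons, List.getLast?_cons_cons] at hl
      exact List.mem_of_mem_getLast? hl.symm
    · exact hx

theorem marginP_swap (P : Profile) (a b : ℕ) : marginP P b a = -marginP P a b := by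
  unfold marginP
  ring

theorem marginP_self (P : Profile) (a : ℕ) : marginP P a a = 0 := by
  simp [marginP]

theorem IsCycle.exists_pos_marginP {P : Profile} {l : List ℕ} (hl : IsCycle P l) {x : ℕ}
    (hx : x ∈ l) : ∃ u ∈ P.cands, 0 < marginP P u x := by
  obtain ⟨hlen, hends, -, hcands, hchain⟩ := hl
  obtain ⟨u, hu, hux⟩ :=
    hchain.exists_rel_of_mem_tail (List.mem_tail_of_head?_eq_getLast? hlen hends hx)
  exact ⟨u, hcands u hu, hux⟩

def IsCondorcetWinner (P : Profile) (x : ℕ) : Prop :=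
  x ∈ P.cands ∧ ∀ y ∈ P.cands, y ≠ x → 0 < marginP P x y

namespace IsCondorcetWinner

variable {P : Profile} {x : ℕ}

theorem not_marginP_pos (hx : IsCondorcetWinner P x) {y : ℕ} (hy : y ∈ P.cands) :
    ¬ 0 < marginP P y x := by
  intro hyx
  obtain rfl | hne := eq_or_ne y x
  · simp [marginP_self] at hyx
  · have := hx.2 y hy hne
    rw [marginP_swap] at this
    omega

theorem not_mem_of_isCycle (hx : IsCondorcetWinner P x) {l : List ℕ} (hl : IsCycle P l) :
    x ∉ l := fun hxl =>
  let ⟨_, hu, hux⟩ := hl.exists_pos_marginP hxl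
  hx.not_marginP_pos hu hux

theorem scDefeats (hx : IsCondorcetWinner P x) {y : ℕ} (hy : y ∈ P.cands) (hyx : y ≠ x) :
    SCdefeats P x y :=
  ⟨hx.2 y hy hyx, fun _ hl hxl _ => absurd hxl (hx.not_mem_of_isCycle hl)⟩

theorem not_scDefeats (hx : IsCondorcetWinner P x) {y : ℕ} (hy : y ∈ P.cands) :
    ¬ SCdefeats P y x :=
  fun h => hx.not_marginP_pos hy h.1

end IsCondorcetWinner

/-- Split Cycle is Condorcet consistent: if `x` is a Condorcet winner in `P`, then
`x` is the unique Split Cycle winner. -/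
theorem splitCycle_condorcet_consistent :
    ∀ (P : Profile) (x : ℕ), x ∈ P.cands →
      (∀ y ∈ P.cands, y ≠ x → 0 < marginP P x y) →
      SplitCycle P = {x} := by
  intro P x hx hcond
  have hwin : IsCondorcetWinner P x := ⟨hx, hcond⟩
  ext y
  simp only [SplitCycle, Finset.mem_filter, Finset.mem_singleton]
  constructor
  · rintro ⟨hy, hundefeated⟩
    by_contra hyx
    exact hundefeated ⟨x, hx, hwin.scDefeats hy hyx⟩
  · rintro rfl
    exact ⟨hx, fun ⟨z, hz, hzy⟩ => hwin.not_scDefeats hz hzy⟩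
end

section
/- The Bucklin voting method violates positive involvement: there exists a profile P, a candidate x ∈ Bucklin(P), and a profile P' obtained from P by adding one new voter whose ballot ranks x in first place, such that x ∉ Bucklin(P'). (A witness: P is the 4-voter profile on candidates {a,b,c,d,e} with ballots abced, aecbd, becda, cdabe, in which Bucklin(P) = {c}; adding a voter with ballot cebda yields Bucklin(P') = {e}.) -/
open scoped Classical

/-- The rank of `x` in the ballot `r` on the candidate set `X`:
one plus the number of candidates ranked above `x`. -/
noncomputable def rankOf (X : Finset ℕ) (r : ℕ → ℕ → Prop) (x : ℕ) : ℕ :=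
  (X.filter (fun b => r b x)).card + 1

/-- The number of voters of `P` who rank `x` in `n`-th place or higher. -/
noncomputable def countRank (P : Profile) (n : ℕ) (x : ℕ) : ℕ :=
  (P.voters.filter (fun i => rankOf P.cands (P.ballot i) x ≤ n)).card

/-- `x` is an `n`-th level majority winner in `P`. -/
noncomputable def nthMaj (P : Profile) (n : ℕ) (x : ℕ) : Prop :=
  2 * countRank P n x > P.voters.card

/-- The smallest positive `k` for which there is a `k`-th level majority winner. -/
noncomputable def bucklinLevel (P : Profile) : ℕ :=
  sInf {n : ℕ | 0 < n ∧ ∃ x ∈ P.cands, nthMaj P n x}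

/-- The Bucklin winners: where `k` is the smallest level at which some candidate is a
`k`-th level majority winner, the `k`-th level majority winners for whom the number of
voters ranking them in `k`-th place or higher is maximal. -/
noncomputable def Bucklin (P : Profile) : Finset ℕ :=
  P.cands.filter (fun x => nthMaj P (bucklinLevel P) x ∧
    ∀ y ∈ P.cands, nthMaj P (bucklinLevel P) y →
      countRank P (bucklinLevel P) y ≤ countRank P (bucklinLevel P) x)

/-!
In the profile abced, aecbd, becda, cdabe no candidate is in the top two of three ballots, so the
Bucklin level is 3; there a and c have majorities and c, in the top three of all four ballots,
is the unique winner. The extra ballot cebda puts e in the top two of three of the five ballots,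
a majority, while c stays in the top two of only two. The level drops to 2, and e alone wins.
-/

open Finset

/-- The ballot listing the candidates from best to worst. -/
def listBallot (l : List ℕ) (a b : ℕ) : Prop :=
  a ∈ l ∧ b ∈ l ∧ l.idxOf a < l.idxOf b

theorem isLinOn_listBallot (l : List ℕ) : IsLinOn l.toFinset (listBallot l) := by
  refine ⟨?_, ?_, ?_, ?_⟩
  · rintro a b ⟨ha, hb, -⟩
    exact ⟨List.mem_toFinset.2 ha, List.mem_toFinset.2 hb⟩
  · rintro a ⟨-, -, h⟩
    exact lt_irrefl _ h
  · rintro a b c ⟨ha, -, hab⟩ ⟨-, hc, hbc⟩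
    exact ⟨ha, hc, hab.trans hbc⟩
  · intro a ha b hb hne
    rw [List.mem_toFinset] at ha hb
    rcases lt_trichotomy (l.idxOf a) (l.idxOf b) with h | h | h
    · exact Or.inl ⟨ha, hb, h⟩
    · exact absurd ((List.idxOf_inj ha).1 h) hne
    · exact Or.inr ⟨hb, ha, h⟩

theorem rankOf_listBallot {l : List ℕ} (hl : l.Nodup) {x : ℕ} (hx : x ∈ l) :
    rankOf l.toFinset (listBallot l) x = l.idxOf x + 1 := by
  have above : l.toFinset.filter (fun b => listBallot l b x) = (l.take (l.idxOf x)).toFinset := by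
    ext b
    rw [mem_filter]
    simp only [List.mem_toFinset, listBallot]
    constructor
    · rintro ⟨hb, -, -, hlt⟩
      exact (List.mem_take_iff_idxOf_lt hb).2 hlt
    · intro hb
      have hb' := List.mem_of_mem_take hb
      exact ⟨hb', hb', hx, (List.mem_take_iff_idxOf_lt hb').1 hb⟩
  rw [rankOf, above, List.toFinset_card_of_nodup (hl.sublist (List.take_sublist _ _)),
    List.length_take_of_le (List.idxOf_lt_length_of_mem hx).le]

theorem ranksFirst_listBallot_cons (x : ℕ) (l : List ℕ) :
    RanksFirst (x :: l).toFinset (listBallot (x :: l)) x := by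
  refine ⟨List.mem_toFinset.2 List.mem_cons_self, fun y hy hyx => ?_⟩
  rw [List.mem_toFinset] at hy
  refine ⟨List.mem_cons_self, hy, ?_⟩
  rw [List.idxOf_cons_self, List.idxOf_cons_ne l (Ne.symm hyx)]
  exact Nat.succ_pos _

def Profile.ofLists (V X : Finset ℕ) (hV : V.Nonempty) (hX : X.Nonempty) (ballot : ℕ → List ℕ)
    (hb : ∀ i ∈ V, (ballot i).toFinset = X) : Profile where
  voters := V
  cands := X
  voters_nonempty := hV
  cands_nonempty := hX
  ballot i := listBallot (ballot i)
  ballot_lin i hi := hb i hi ▸ isLinOn_listBallot (ballot i)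

def listCount (V : Finset ℕ) (ballot : ℕ → List ℕ) (n x : ℕ) : ℕ :=
  #{i ∈ V | (ballot i).idxOf x < n}

def maxCountMajorities (X : Finset ℕ) (N : ℕ) (c : ℕ → ℕ) : Finset ℕ :=
  X.filter fun x => N < 2 * c x ∧ ∀ y ∈ X, N < 2 * c y → c y ≤ c x

section Bucklin

variable {P : Profile}

theorem countRank_mono (x : ℕ) : Monotone fun n => countRank P n x :=
  fun _ _ hmn => card_le_card (monotone_filter_right _ fun _ _ h => h.trans hmn)

theorem nthMaj_mono {m n x : ℕ} (hmn : m ≤ n) (h : nthMaj P m x) : nthMaj P n x :=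
  lt_of_lt_of_le h (Nat.mul_le_mul_left 2 (countRank_mono x hmn))

theorem bucklinLevel_eq_succ {n : ℕ} (hwin : ∃ x ∈ P.cands, nthMaj P (n + 1) x)
    (hbelow : ∀ x ∈ P.cands, ¬ nthMaj P n x) : bucklinLevel P = n + 1 := by
  have hmem : n + 1 ∈ {n : ℕ | 0 < n ∧ ∃ x ∈ P.cands, nthMaj P n x} := ⟨n.succ_pos, hwin⟩
  refine le_antisymm (Nat.sInf_le hmem) (le_csInf ⟨_, hmem⟩ ?_)
  rintro m ⟨-, x, hx, hm⟩
  by_contra! hlt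
  exact hbelow x hx (nthMaj_mono (Nat.le_of_lt_succ hlt) hm)

theorem bucklin_eq_maxCountMajorities {c : ℕ → ℕ}
    (hc : ∀ x ∈ P.cands, countRank P (bucklinLevel P) x = c x) :
    Bucklin P = maxCountMajorities P.cands P.voters.card c := by
  refine filter_congr fun x hx => ?_
  simp only [nthMaj, gt_iff_lt, hc x hx]
  exact and_congr_right' (forall₂_congr fun y hy => by rw [hc y hy])

end Bucklin

section ofLists

variable {V X : Finset ℕ} {hV : V.Nonempty} {hX : X.Nonempty} {ballot : ℕ → List ℕ}
  {hb : ∀ i ∈ V, (ballot i).toFinset = X}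

theorem countRank_ofLists (hnd : ∀ i ∈ V, (ballot i).Nodup) {x : ℕ} (hx : x ∈ X) (n : ℕ) :
    countRank (Profile.ofLists V X hV hX ballot hb) n x = listCount V ballot n x := by
  refine congrArg card (filter_congr fun i hi => ?_)
  have hxi : x ∈ ballot i := List.mem_toFinset.1 (hb i hi ▸ hx)
  change rankOf X (listBallot (ballot i)) x ≤ n ↔ _
  rw [← hb i hi, rankOf_listBallot (hnd i hi) hxi, Nat.add_one_le_iff]

theorem addVoter_ofLists {j x : ℕ} {l : List ℕ} (hj : j ∉ V) (hbj : ballot j = x :: l)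
    {hb' : ∀ i ∈ insert j V, (ballot i).toFinset = X} :
    AddVoter (Profile.ofLists V X hV hX ballot hb)
      (Profile.ofLists (insert j V) X (insert_nonempty j V) hX ballot hb') j x := by
  refine ⟨rfl, hj, rfl, fun _ _ _ _ => Iff.rfl, ?_⟩
  change RanksFirst X (listBallot (ballot j)) x
  rw [← hb' j (mem_insert_self j V), hbj]
  exact ranksFirst_listBallot_cons x l

theorem nthMaj_ofLists_iff (hnd : ∀ i ∈ V, (ballot i).Nodup) {x : ℕ} (hx : x ∈ X) (n : ℕ) :
    nthMaj (Profile.ofLists V X hV hX ballot hb) n x ↔ V.card < 2 * listCount V ballot n x := by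
  rw [nthMaj, countRank_ofLists hnd hx]
  rfl

theorem bucklin_ofLists (hnd : ∀ i ∈ V, (ballot i).Nodup) {n : ℕ}
    (hwin : ∃ x ∈ X, V.card < 2 * listCount V ballot (n + 1) x)
    (hbelow : ∀ x ∈ X, ¬ V.card < 2 * listCount V ballot n x) :
    Bucklin (Profile.ofLists V X hV hX ballot hb) =
      maxCountMajorities X V.card (listCount V ballot (n + 1)) := by
  have hlevel : bucklinLevel (Profile.ofLists V X hV hX ballot hb) = n + 1 := by
    refine bucklinLevel_eq_succ ?_ fun x hx => (nthMaj_ofLists_iff hnd hx n).not.2 (hbelow x hx)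
    obtain ⟨x, hx, hmaj⟩ := hwin
    exact ⟨x, hx, (nthMaj_ofLists_iff hnd hx _).2 hmaj⟩
  refine bucklin_eq_maxCountMajorities fun x hx => ?_
  rw [hlevel]
  exact countRank_ofLists hnd hx _

end ofLists

/-- Candidates a, b, c, d, e are encoded as 0, …, 4, and voter `i` casts ballot `i`. -/
def witnessBallot : ℕ → List ℕ
  | 0 => [0, 1, 2, 4, 3]
  | 1 => [0, 4, 2, 1, 3]
  | 2 => [1, 4, 2, 3, 0]
  | 3 => [2, 3, 0, 1, 4]
  | _ => [2, 4, 1, 3, 0]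

theorem witnessBallot_toFinset (i : ℕ) : (witnessBallot i).toFinset = {0, 1, 2, 3, 4} := by
  unfold witnessBallot
  split <;> decide

theorem witnessBallot_nodup (i : ℕ) : (witnessBallot i).Nodup := by
  unfold witnessBallot
  split <;> decide

def witnessProfile (V : Finset ℕ) (hV : V.Nonempty) : Profile :=
  Profile.ofLists V {0, 1, 2, 3, 4} hV (insert_nonempty _ _) witnessBallot
    fun i _ => witnessBallot_toFinset i

def profileBefore : Profile := witnessProfile {0, 1, 2, 3} (insert_nonempty _ _)

def profileAfter : Profile := witnessProfile (insert 4 {0, 1, 2, 3}) (insert_nonempty _ _)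

theorem bucklin_profileBefore : Bucklin profileBefore = {2} := by
  rw [profileBefore, witnessProfile,
    bucklin_ofLists (fun i _ => witnessBallot_nodup i) (n := 2) (by decide) (by decide)]
  decide

theorem bucklin_profileAfter : Bucklin profileAfter = {4} := by
  rw [profileAfter, witnessProfile,
    bucklin_ofLists (fun i _ => witnessBallot_nodup i) (n := 1) (by decide) (by decide)]
  decide

theorem addVoter_profileBefore_profileAfter : AddVoter profileBefore profileAfter 4 2 :=
  addVoter_ofLists (hb := fun i _ => witnessBallot_toFinset i)
    (hb' := fun i _ => witnessBallot_toFinset i) (by decide) rfl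

theorem bucklin_violates_PI :
    ∃ (P P' : Profile) (j x : ℕ),
      x ∈ Bucklin P ∧ AddVoter P P' j x ∧ x ∉ Bucklin P' := by
  refine ⟨profileBefore, profileAfter, 4, 2, ?_, addVoter_profileBefore_profileAfter, ?_⟩
  · rw [bucklin_profileBefore]
    exact mem_singleton_self 2
  · rw [bucklin_profileAfter]
    decide
end

section
/- The Copeland voting method violates positive involvement: there exists a profile P, a candidate x ∈ Copeland(P), and a profile P' obtained from P by adding one new voter whose ballot ranks x in first place, such that x ∉ Copeland(P'). (A witness: P is the 5-voter profile on candidates {a,b,c} with ballots abc, abc, bca, cab, cab, in which Copeland(P) = {a,b,c}; adding a voter with ballot bac yields Copeland(P') = {a}, so b loses.) -/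
open scoped Classical

/-- The Copeland score of `a`: the number of candidates `b` with positive margin of `a`
over `b`, minus the number of candidates `b` with positive margin of `b` over `a`. -/
noncomputable def copelandScore (P : Profile) (a : ℕ) : ℤ :=
  ((P.cands.filter (fun b => 0 < marginP P a b)).card : ℤ) -
    ((P.cands.filter (fun b => 0 < marginP P b a)).card : ℤ)

/-- The Copeland winners: the candidates with maximal Copeland score. -/
noncomputable def Copeland (P : Profile) : Finset ℕ :=
  P.cands.filter (fun x => ∀ y ∈ P.cands, copelandScore P y ≤ copelandScore P x)

def rk (i x : ℕ) : ℕ :=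
  if i = 2 then (if x = 1 then 0 else if x = 2 then 1 else 2)
  else if i = 3 ∨ i = 4 then (if x = 2 then 0 else if x = 0 then 1 else 2)
  else if i = 5 then (if x = 1 then 0 else if x = 0 then 1 else 2)
  else x

def bal (i a b : ℕ) : Prop :=
  a ∈ ({0,1,2} : Finset ℕ) ∧ b ∈ ({0,1,2} : Finset ℕ) ∧ rk i a < rk i b

instance (i a b : ℕ) : Decidable (bal i a b) :=
  inferInstanceAs (Decidable (_ ∧ _ ∧ _))

lemma rk_ne (i : ℕ) : ∀ a ∈ ({0,1,2} : Finset ℕ), ∀ b ∈ ({0,1,2} : Finset ℕ),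
    a ≠ b → rk i a ≠ rk i b := by
  intro a ha b hb hab
  fin_cases ha <;> fin_cases hb <;> simp only [rk] <;> split_ifs <;> first | omega | (exfalso; assumption)

lemma bal_lin (i : ℕ) : IsLinOn ({0,1,2} : Finset ℕ) (bal i) := by
  refine ⟨fun a b h => ⟨h.1, h.2.1⟩, fun a h => lt_irrefl _ h.2.2,
    fun a b c h1 h2 => ⟨h1.1, h2.2.1, lt_trans h1.2.2 h2.2.2⟩, ?_⟩
  intro a ha b hb hab
  rcases Nat.lt_or_ge (rk i a) (rk i b) with h | h
  · exact Or.inl ⟨ha, hb, h⟩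
  · exact Or.inr ⟨hb, ha, lt_of_le_of_ne h (rk_ne i b hb a ha hab.symm)⟩

def P0 : Profile where
  voters := {0,1,2,3,4}
  cands := {0,1,2}
  voters_nonempty := ⟨0, by decide⟩
  cands_nonempty := ⟨0, by decide⟩
  ballot := bal
  ballot_lin := fun i _ => bal_lin i

lemma marginP0_eq (a b : ℕ) : marginP P0 a b =
    (((Finset.filter (fun i => bal i a b) ({0,1,2,3,4} : Finset ℕ)).card : ℤ) -
     ((Finset.filter (fun i => bal i b a) ({0,1,2,3,4} : Finset ℕ)).card : ℤ)) := by
  unfold marginP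
  congr 1
  · congr 1
    congr 1
    exact Finset.filter_congr_decidable _ (fun i => bal i a b) _
  · congr 1
    congr 1
    exact Finset.filter_congr_decidable _ (fun i => bal i b a) _

def P1 : Profile where
  voters := {0,1,2,3,4,5}
  cands := {0,1,2}
  voters_nonempty := ⟨0, by decide⟩
  cands_nonempty := ⟨0, by decide⟩
  ballot := bal
  ballot_lin := fun i _ => bal_lin i

lemma marginP1_eq (a b : ℕ) : marginP P1 a b =
    (((Finset.filter (fun i => bal i a b) ({0,1,2,3,4,5} : Finset ℕ)).card : ℤ) -
     ((Finset.filter (fun i => bal i b a) ({0,1,2,3,4,5} : Finset ℕ)).card : ℤ)) := by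
  unfold marginP
  congr 1
  · congr 1
    congr 1
    exact Finset.filter_congr_decidable _ (fun i => bal i a b) _
  · congr 1
    congr 1
    exact Finset.filter_congr_decidable _ (fun i => bal i b a) _

lemma score_eq (P : Profile) (hc : P.cands = {0,1,2}) (a : ℕ) :
    copelandScore P a =
      (((if 0 < marginP P a 0 then 1 else 0) + ((if 0 < marginP P a 1 then 1 else 0)
        + (if 0 < marginP P a 2 then 1 else 0)) : ℕ) : ℤ) -
      (((if 0 < marginP P 0 a then 1 else 0) + ((if 0 < marginP P 1 a then 1 else 0)
        + (if 0 < marginP P 2 a then 1 else 0)) : ℕ) : ℤ) := by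
  unfold copelandScore
  rw [hc, Finset.card_filter, Finset.card_filter,
    show ({0,1,2} : Finset ℕ) = insert 0 (insert 1 {2}) from rfl,
    Finset.sum_insert (by decide), Finset.sum_insert (by decide), Finset.sum_singleton,
    Finset.sum_insert (by decide), Finset.sum_insert (by decide), Finset.sum_singleton]

-- margins in P0
lemma m001 : marginP P0 0 1 = 3 := by rw [marginP0_eq]; decide
lemma m010 : marginP P0 1 0 = -3 := by rw [marginP0_eq]; decide
lemma m012 : marginP P0 1 2 = 1 := by rw [marginP0_eq]; decide
lemma m021 : marginP P0 2 1 = -1 := by rw [marginP0_eq]; decide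
lemma m020 : marginP P0 2 0 = 1 := by rw [marginP0_eq]; decide
lemma m002 : marginP P0 0 2 = -1 := by rw [marginP0_eq]; decide
lemma m000 : marginP P0 0 0 = 0 := by rw [marginP0_eq]; decide
lemma m011 : marginP P0 1 1 = 0 := by rw [marginP0_eq]; decide
lemma m022 : marginP P0 2 2 = 0 := by rw [marginP0_eq]; decide

-- margins in P1
lemma m101 : marginP P1 0 1 = 2 := by rw [marginP1_eq]; decide
lemma m110 : marginP P1 1 0 = -2 := by rw [marginP1_eq]; decide
lemma m112 : marginP P1 1 2 = 2 := by rw [marginP1_eq]; decide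
lemma m121 : marginP P1 2 1 = -2 := by rw [marginP1_eq]; decide
lemma m120 : marginP P1 2 0 = 0 := by rw [marginP1_eq]; decide
lemma m102 : marginP P1 0 2 = 0 := by rw [marginP1_eq]; decide
lemma m100 : marginP P1 0 0 = 0 := by rw [marginP1_eq]; decide
lemma m111 : marginP P1 1 1 = 0 := by rw [marginP1_eq]; decide
lemma m122 : marginP P1 2 2 = 0 := by rw [marginP1_eq]; decide

lemma s00 : copelandScore P0 0 = 0 := by
  rw [score_eq P0 rfl, m000, m001, m002, m010, m020]; norm_num
lemma s01 : copelandScore P0 1 = 0 := by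
  rw [score_eq P0 rfl, m010, m011, m012, m001, m021]; norm_num
lemma s02 : copelandScore P0 2 = 0 := by
  rw [score_eq P0 rfl, m020, m021, m022, m002, m012]; norm_num

lemma s10 : copelandScore P1 0 = 1 := by
  rw [score_eq P1 rfl, m100, m101, m102, m110, m120]; norm_num
lemma s11 : copelandScore P1 1 = 0 := by
  rw [score_eq P1 rfl, m110, m111, m112, m101, m121]; norm_num

theorem copeland_violates_PI :
    ∃ (P P' : Profile) (j x : ℕ),
      x ∈ Copeland P ∧ AddVoter P P' j x ∧ x ∉ Copeland P' := by
  refine ⟨P0, P1, 5, 1, ?_, ?_, ?_⟩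
  · rw [Copeland, Finset.mem_filter]
    refine ⟨by decide, ?_⟩
    intro y hy
    rw [show P0.cands = ({0,1,2} : Finset ℕ) from rfl] at hy
    fin_cases hy <;> simp [s00, s01, s02]
  · refine ⟨rfl, by decide, by decide, fun i _ a b => Iff.rfl, ?_⟩
    refine ⟨by decide, ?_⟩
    intro y hy hne
    fin_cases hy
    · exact ⟨by decide, by decide, by decide⟩
    · exact absurd rfl hne
    · exact ⟨by decide, by decide, by decide⟩
  · intro h
    rw [Copeland, Finset.mem_filter] at h
    have := h.2 0 (by rw [show P1.cands = ({0,1,2} : Finset ℕ) from rfl]; decide)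
    rw [s10, s11] at this
    norm_num at this
end

section
/- The Ranked Pairs voting method violates positive involvement: there exists a profile P, a candidate x ∈ RP(P), and a profile P' obtained from P by adding one new voter whose ballot ranks x in first place, such that x ∉ RP(P'). (A witness: a 20-voter profile on {a,b,c,d} whose margin graph has edges a→c with margin 8, a→d with margin 2, b→a with margin 2, c→b with margin 2, d→b with margin 4, d→c with margin 6, in which RP winners are {a,d}; adding a voter with ballot dabc yields RP winner set {a}, so d loses.) -/
/-! In the 12-voter profile `profP` on the candidates `0, 1, 2, 3` the margins are 8 for
`(2,3)`, 6 for `(1,3)`, 4 for `(1,2)` and 2 for each of `(0,1)`, `(0,2)`, `(3,0)`. Breaking the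
tie as `(3,0), (0,1), (0,2)` locks in `3 > 0`, after which `0 > 1` and `0 > 2` would close cycles
through `3`, so `1` tops the ranking. A new voter with ballot `1 0 2 3` lowers the margins of
`(0,1)` and `(3,0)` to 1 but raises that of `(0,2)` to 3. Now `0 > 2` is locked before `(3,0)` is
considered, so `3 > 0` would close the cycle `3 > 0 > 2 > 3`; whichever way the remaining tie is
broken, `0 > 1` is locked in and `1` loses. -/

open scoped Classical

/-- The set of pairs `(x,y)` of distinct candidates with nonnegative margin. -/
def rpPairs (P : Profile) : Set (ℕ × ℕ) :=
  {p | p.1 ∈ P.cands ∧ p.2 ∈ P.cands ∧ p.1 ≠ p.2 ∧ 0 ≤ marginP P p.1 p.2}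

/-- `r` is a strict linear order on the set `S` of pairs. -/
def IsLinOnPairs (S : Set (ℕ × ℕ)) (r : ℕ × ℕ → ℕ × ℕ → Prop) : Prop :=
  (∀ p ∈ S, ¬ r p p) ∧
  (∀ p ∈ S, ∀ q ∈ S, ∀ u ∈ S, r p q → r q u → r p u) ∧
  (∀ p ∈ S, ∀ q ∈ S, p ≠ q → r p q ∨ r q p)

/-- `p` has higher priority than `q` according to the margins of `P` with ties
broken by the tie-breaking order `T`. -/
def higherPri (P : Profile) (T : ℕ × ℕ → ℕ × ℕ → Prop) (p q : ℕ × ℕ) : Prop :=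
  marginP P q.1 q.2 < marginP P p.1 p.2 ∨
    (marginP P p.1 p.2 = marginP P q.1 q.2 ∧ T p q)

/-- The relation (set of pairs) `R` is acyclic. -/
def AcyclicRel (R : Set (ℕ × ℕ)) : Prop :=
  ∀ x, ¬ Relation.TransGen (fun u v => (u, v) ∈ R) x x

/-- One step of the Ranked Pairs procedure: lock in the pair `p` if doing so keeps the
relation acyclic; otherwise lock in the reverse pair. -/
noncomputable def rpStep (R : Set (ℕ × ℕ)) (p : ℕ × ℕ) : Set (ℕ × ℕ) :=
  if AcyclicRel (insert p R) then insert p R else insert (p.2, p.1) R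

/-- Processing the list `l` of pairs in order by the Ranked Pairs procedure. -/
noncomputable def rpRanking (l : List (ℕ × ℕ)) : Set (ℕ × ℕ) :=
  l.foldl rpStep ∅

/-- `l` enumerates exactly the pairs of distinct candidates with nonnegative margin,
in decreasing order of priority. -/
def IsPriorityList (P : Profile) (T : ℕ × ℕ → ℕ × ℕ → Prop) (l : List (ℕ × ℕ)) : Prop :=
  (∀ p, p ∈ l ↔ p ∈ rpPairs P) ∧ l.Pairwise (higherPri P T)

/-- The Ranked Pairs winners: `x` wins iff for some tie-breaking linear order `T` on the
pairs with nonnegative margin, `x` is the maximum of the Ranked Pairs ranking obtained by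
processing the pairs in decreasing order of priority. -/
noncomputable def RP (P : Profile) : Finset ℕ :=
  P.cands.filter (fun x =>
    ∃ (T : ℕ × ℕ → ℕ × ℕ → Prop) (l : List (ℕ × ℕ)),
      IsLinOnPairs (rpPairs P) T ∧ IsPriorityList P T l ∧
      ∀ y ∈ P.cands, y ≠ x → (x, y) ∈ rpRanking l)

def rankingBallot (X : Finset ℕ) (r : List ℕ) (a b : ℕ) : Prop :=
  a ∈ X ∧ b ∈ X ∧ r.idxOf a < r.idxOf b

instance (X : Finset ℕ) (r : List ℕ) : DecidableRel (rankingBallot X r) :=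
  fun _ _ => inferInstanceAs (Decidable (_ ∧ _ ∧ _))

theorem isLinOn_rankingBallot {X : Finset ℕ} {r : List ℕ} (hX : ∀ x ∈ X, x ∈ r) :
    IsLinOn X (rankingBallot X r) := by
  refine ⟨fun a b h => ⟨h.1, h.2.1⟩, fun a h => h.2.2.false, fun a b c h h' =>
    ⟨h.1, h'.2.1, h.2.2.trans h'.2.2⟩, fun a ha b hb hab => ?_⟩
  have : r.idxOf a ≠ r.idxOf b := fun h => hab ((List.idxOf_inj (hX a ha)).1 h)
  rcases this.lt_or_gt with h | h
  · exact .inl ⟨ha, hb, h⟩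
  · exact .inr ⟨hb, ha, h⟩

def ofRankings (X : Finset ℕ) (hX : X.Nonempty) (rs : List (List ℕ)) (hrs : rs ≠ [])
    (h : ∀ r ∈ rs, ∀ x ∈ X, x ∈ r) : Profile where
  voters := Finset.range rs.length
  cands := X
  voters_nonempty := by simpa [List.length_pos_iff] using hrs
  cands_nonempty := hX
  ballot i := rankingBallot X (rs.getD i [])
  ballot_lin i hi := isLinOn_rankingBallot
    (h _ (by rw [List.getD_eq_getElem _ _ (Finset.mem_range.1 hi)]; exact List.getElem_mem _))

/-- Replaces the classical decidability instances in `marginP` by computable ones, so that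
margins of explicit profiles can be evaluated by `decide`. -/
theorem marginP_ofRankings (X : Finset ℕ) (hX : X.Nonempty) (rs : List (List ℕ)) (hrs : rs ≠ [])
    (h : ∀ r ∈ rs, ∀ x ∈ X, x ∈ r) (a b : ℕ) :
    marginP (ofRankings X hX rs hrs h) a b =
      (((Finset.range rs.length).filter fun i => rankingBallot X (rs.getD i []) a b).card : ℤ) -
      ((Finset.range rs.length).filter fun i => rankingBallot X (rs.getD i []) b a).card := by
  unfold marginP
  congr 3 <;> ext <;> simp [ofRankings]

theorem addVoter_ofRankings {X : Finset ℕ} {hX : X.Nonempty} {rs : List (List ℕ)} {hrs : rs ≠ []}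
    {h : ∀ r ∈ rs, ∀ x ∈ X, x ∈ r} {x : ℕ} {r : List ℕ} {hrs' : rs ++ [x :: r] ≠ []}
    {h' : ∀ r' ∈ rs ++ [x :: r], ∀ y ∈ X, y ∈ r'} (hx : x ∈ X) :
    AddVoter (ofRankings X hX rs hrs h) (ofRankings X hX (rs ++ [x :: r]) hrs' h')
      rs.length x := by
  refine ⟨rfl, by simp [ofRankings], by simp [ofRankings, Finset.range_add_one],
    fun i hi a b => ?_, hx, fun y hy hyx => ⟨hx, hy, ?_⟩⟩
  · simp [ofRankings, List.getElem?_append_left (Finset.mem_range.1 hi)]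
  · simp [List.idxOf_cons_ne _ (Ne.symm hyx)]

theorem acyclicRel_of_lt {R : Set (ℕ × ℕ)} (f : ℕ → ℕ) (h : ∀ p ∈ R, f p.1 < f p.2) :
    AcyclicRel R := by
  intro x hx
  have key : ∀ {y z}, Relation.TransGen (fun u v => (u, v) ∈ R) y z → f y < f z := by
    intro y z hyz
    induction hyz with
    | single h' => exact h _ h'
    | tail _ h' ih => exact ih.trans (h _ h')
  exact (key hx).false

theorem not_acyclicRel_of_cycle {R : Set (ℕ × ℕ)} {a b c : ℕ} (hab : (a, b) ∈ R)
    (hbc : (b, c) ∈ R) (hca : (c, a) ∈ R) : ¬ AcyclicRel R := fun h =>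
  h a (.head hab (.head hbc (.single hca)))

theorem rpStep_of_lt {R : Set (ℕ × ℕ)} {p : ℕ × ℕ} (f : ℕ → ℕ) (hR : ∀ q ∈ R, f q.1 < f q.2)
    (hp : f p.1 < f p.2) : rpStep R p = insert p R :=
  if_pos (acyclicRel_of_lt f (by simpa [hp] using hR))

theorem rpStep_of_cycle {R : Set (ℕ × ℕ)} {p : ℕ × ℕ} (c : ℕ) (h₁ : (p.2, c) ∈ R)
    (h₂ : (c, p.1) ∈ R) : rpStep R p = insert (p.2, p.1) R :=
  if_neg (not_acyclicRel_of_cycle (Set.mem_insert _ _) (Set.mem_insert_of_mem _ h₁)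
    (Set.mem_insert_of_mem _ h₂))

theorem List.Nodup.pairwise_idxOf_lt {α : Type*} [BEq α] [LawfulBEq α] {l : List α}
    (hl : l.Nodup) : l.Pairwise fun a b => l.idxOf a < l.idxOf b :=
  List.pairwise_iff_getElem.2 fun i j hi hj hij => by
    rwa [hl.idxOf_getElem, hl.idxOf_getElem]

section PriorityList

variable {P : Profile} {T : ℕ × ℕ → ℕ × ℕ → Prop} {l l' : List (ℕ × ℕ)} {p q : ℕ × ℕ}

theorem higherPri_of_le (h : marginP P q.1 q.2 ≤ marginP P p.1 p.2)
    (hT : marginP P p.1 p.2 = marginP P q.1 q.2 → T p q) : higherPri P T p q :=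
  h.lt_or_eq.imp_right fun h => ⟨h.symm, hT h.symm⟩

theorem not_higherPri_self (hT : IsLinOnPairs (rpPairs P) T) (hp : p ∈ rpPairs P) :
    ¬ higherPri P T p p := by
  rintro (h | ⟨-, h⟩)
  exacts [h.false, hT.1 p hp h]

theorem higherPri_asymm (hT : IsLinOnPairs (rpPairs P) T) (hp : p ∈ rpPairs P)
    (hq : q ∈ rpPairs P) (h : higherPri P T p q) : ¬ higherPri P T q p := by
  rintro (h' | ⟨e', h'⟩)
  · rcases h with h | ⟨e, -⟩
    exacts [h.asymm h', h'.ne e]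
  · rcases h with h | ⟨-, h⟩
    exacts [h.ne e', hT.1 p hp (hT.2.1 p hp q hq p hp h h')]

theorem IsPriorityList.eq (hT : IsLinOnPairs (rpPairs P) T) (hl : IsPriorityList P T l)
    (hl' : IsPriorityList P T l') : l = l' := by
  have nodup {l} (hl : IsPriorityList P T l) : l.Nodup :=
    List.nodup_iff_pairwise_ne.2 <| hl.2.imp_of_mem fun {a _} ha _ hab => by
      rintro rfl
      exact not_higherPri_self hT ((hl.1 a).1 ha) hab
  refine List.Perm.eq_of_pairwise (fun a b ha hb hab hba => ?_) hl.2 hl'.2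
    ((List.perm_ext_iff_of_nodup (nodup hl) (nodup hl')).2 fun p => (hl.1 p).trans (hl'.1 p).symm)
  exact (higherPri_asymm hT ((hl.1 a).1 ha) ((hl'.1 b).1 hb) hab hba).elim

theorem isPriorityList_of_pairwise (hmem : ∀ p, p ∈ l ↔ p ∈ rpPairs P)
    (hle : l.Pairwise fun p q => marginP P q.1 q.2 ≤ marginP P p.1 p.2)
    (hT : l.Pairwise fun p q => marginP P p.1 p.2 = marginP P q.1 q.2 → T p q) :
    IsPriorityList P T l :=
  ⟨hmem, (hle.and hT).imp fun h => higherPri_of_le h.1 h.2⟩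

theorem isLinOnPairs_idxOf {S : Set (ℕ × ℕ)} (hmem : ∀ p, p ∈ l ↔ p ∈ S) :
    IsLinOnPairs S fun p q => l.idxOf p < l.idxOf q :=
  ⟨fun _ _ => lt_irrefl _, fun _ _ _ _ _ _ => lt_trans,
    fun p hp _ _ hpq => Nat.lt_or_gt_of_ne (mt (List.idxOf_inj ((hmem p).2 hp)).1 hpq)⟩

-- Ties are broken by position in `l` itself.
theorem mem_RP_of_pairwise {x : ℕ} (hx : x ∈ P.cands) (hl : l.Nodup)
    (hmem : ∀ p, p ∈ l ↔ p ∈ rpPairs P)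
    (hle : l.Pairwise fun p q => marginP P q.1 q.2 ≤ marginP P p.1 p.2)
    (hwin : ∀ y ∈ P.cands, y ≠ x → (x, y) ∈ rpRanking l) : x ∈ RP P :=
  Finset.mem_filter.2 ⟨hx, _, l, isLinOnPairs_idxOf hmem,
    isPriorityList_of_pairwise hmem hle (hl.pairwise_idxOf_lt.imp (Function.const _ ·)), hwin⟩

theorem isPriorityList_of_single_tie {s t : ℕ × ℕ} (hmem : ∀ p, p ∈ l ↔ p ∈ rpPairs P)
    (hl : l.Pairwise fun p q => marginP P q.1 q.2 < marginP P p.1 p.2 ∨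
      (marginP P p.1 p.2 = marginP P q.1 q.2 ∧ p = s ∧ q = t))
    (hst : T s t) : IsPriorityList P T l :=
  ⟨hmem, hl.imp fun h => h.imp_right fun ⟨e, hs, ht⟩ => ⟨e, hs ▸ ht ▸ hst⟩⟩

theorem forall_mem_iff_mem_rpPairs
    (hl : ∀ p ∈ l, p.1 ∈ P.cands ∧ p.2 ∈ P.cands)
    (h : ∀ a ∈ P.cands, ∀ b ∈ P.cands, (a, b) ∈ l ↔ a ≠ b ∧ 0 ≤ marginP P a b) :
    ∀ p, p ∈ l ↔ p ∈ rpPairs P := by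
  refine fun p => ⟨fun hp => ?_, fun ⟨h₁, h₂, hp⟩ => (h _ h₁ _ h₂).2 hp⟩
  obtain ⟨h₁, h₂⟩ := hl p hp
  exact ⟨h₁, h₂, (h _ h₁ _ h₂).1 hp⟩

end PriorityList

def cands4 : Finset ℕ := {0, 1, 2, 3}

def rankings12 : List (List ℕ) :=
  [[0,1,2,3], [0,2,1,3], [0,2,1,3], [0,2,1,3], [1,0,2,3], [1,2,3,0], [1,2,3,0],
   [1,2,3,0], [1,2,3,0], [2,3,0,1], [3,0,1,2], [3,0,1,2]]

def profP : Profile := ofRankings cands4 (by decide) rankings12 (by decide) (by decide)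

def profP' : Profile :=
  ofRankings cands4 (by decide) (rankings12 ++ [[1,0,2,3]]) (by decide) (by decide)

theorem rpRanking_profP : rpRanking [(2,3), (1,3), (1,2), (3,0), (0,1), (0,2)] =
    {(2,0), (1,0), (3,0), (1,2), (1,3), (2,3)} := by
  simp [rpRanking, rpStep_of_lt (fun n => (n + 3) % 4), rpStep_of_cycle 3]

theorem rpRanking_profP'₁ : rpRanking [(2,3), (1,3), (1,2), (0,2), (0,1), (3,0)] =
    {(0,3), (0,1), (0,2), (1,2), (1,3), (2,3)} := by
  simp [rpRanking, rpStep_of_lt id, rpStep_of_cycle 2]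

theorem rpRanking_profP'₂ : rpRanking [(2,3), (1,3), (1,2), (0,2), (3,0), (0,1)] =
    {(0,1), (0,3), (0,2), (1,2), (1,3), (2,3)} := by
  simp [rpRanking, rpStep_of_lt id, rpStep_of_cycle 2]

theorem one_mem_RP_profP : 1 ∈ RP profP := by
  refine mem_RP_of_pairwise (l := [(2,3), (1,3), (1,2), (3,0), (0,1), (0,2)]) (by decide)
    (by decide) (forall_mem_iff_mem_rpPairs (by decide) ?_) ?_ ?_
  · simp only [profP, marginP_ofRankings]; decide
  · simp only [profP, marginP_ofRankings]; decide
  · simp [rpRanking_profP, profP, ofRankings, cands4]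

theorem mem_rpPairs_profP'_iff :
    ∀ p, p ∈ [(2,3), (1,3), (1,2), (0,2), (0,1), (3,0)] ↔ p ∈ rpPairs profP' :=
  forall_mem_iff_mem_rpPairs (by decide) (by simp only [profP', marginP_ofRankings]; decide)

theorem one_zero_not_mem_rpRanking_profP' {T : ℕ × ℕ → ℕ × ℕ → Prop} {l : List (ℕ × ℕ)}
    (hT : IsLinOnPairs (rpPairs profP') T) (hl : IsPriorityList profP' T l) :
    (1, 0) ∉ rpRanking l := by
  have hmem := mem_rpPairs_profP'_iff
  have hmem' : ∀ p, p ∈ [(2,3), (1,3), (1,2), (0,2), (3,0), (0,1)] ↔ p ∈ rpPairs profP' :=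
    fun p => (List.Perm.mem_iff (by decide)).trans (hmem p)
  rcases hT.2.2 (0,1) ((hmem _).1 (by decide)) (3,0) ((hmem _).1 (by decide)) (by decide)
    with hT' | hT'
  · rw [hl.eq hT (isPriorityList_of_single_tie hmem
      (by simp only [profP', marginP_ofRankings]; decide) hT'), rpRanking_profP'₁]
    simp
  · rw [hl.eq hT (isPriorityList_of_single_tie hmem'
      (by simp only [profP', marginP_ofRankings]; decide) hT'), rpRanking_profP'₂]
    simp

theorem one_not_mem_RP_profP' : 1 ∉ RP profP' := fun h => by
  obtain ⟨-, T, l, hT, hl, hwin⟩ := Finset.mem_filter.1 h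
  exact one_zero_not_mem_rpRanking_profP' hT hl (hwin 0 (by decide) (by decide))

theorem rankedPairs_violates_PI :
    ∃ (P P' : Profile) (j x : ℕ),
      x ∈ RP P ∧ AddVoter P P' j x ∧ x ∉ RP P' :=
  ⟨profP, profP', 12, 1, one_mem_RP_profP, addVoter_ofRankings (by decide), one_not_mem_RP_profP'⟩
end
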